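/- arXiv:2210.06768 — 2 statements merged into one kernel-verified Lean document; each statement's English description precedes it below -/
import Mathlib

section
/- For every positive integer k and every real x > 0, the k-th derivative of x^k F(x) equals k! ∫_0^∞ e^{-t} t^k/(t+x)^{k+1} dt; in particular it is strictly positive. -/
noncomputable def F (x : ℝ) : ℝ := ∫ t in Set.Ioi (0:ℝ), Real.exp (-t) / (t + x)

/-!
Long division of `y ^ k` by `t + y` leaves a polynomial in `y` of degree `< k` and the remainder
`(-t) ^ k`, so on `x > 0` the function `x ^ k * F x` is a polynomial of degree `< k` plus
`(-1) ^ k * ∫ e^{-t} t^k / (t + x) dt`. The `k`-th derivative kills the polynomial, and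
differentiating `k` times under the integral sign turns `1 / (t + x)` into
`(-1) ^ k * k! / (t + x) ^ (k + 1)`.
-/

open MeasureTheory Set Real Filter Topology Polynomial
open scoped Nat

lemma integrableOn_exp_neg_mul_pow (j : ℕ) :
    IntegrableOn (fun t : ℝ => exp (-t) * t ^ j) (Ioi 0) := by
  refine (GammaIntegral_convergent (s := j + 1) (by positivity)).congr_fun
    (fun t _ => ?_) measurableSet_Ioi
  simp only [add_sub_cancel_right, rpow_natCast]

lemma integrableOn_exp_neg_mul_pow_div_pow (j m : ℕ) {x : ℝ} (hx : 0 < x) :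
    IntegrableOn (fun t : ℝ => exp (-t) * t ^ j / (t + x) ^ m) (Ioi 0) := by
  have hcont : ContinuousOn (fun t : ℝ => exp (-t) * t ^ j / (t + x) ^ m) (Ioi 0) :=
    (continuous_neg.rexp.mul (continuous_pow j)).continuousOn.div
      ((continuous_id.add continuous_const).pow m).continuousOn fun t (ht : 0 < t) => by
        positivity
  refine Integrable.mono' ((integrableOn_exp_neg_mul_pow j).const_mul (x ^ m)⁻¹)
    (hcont.aestronglyMeasurable measurableSet_Ioi) ?_
  filter_upwards [ae_restrict_mem measurableSet_Ioi] with t (ht : 0 < t)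
  rw [norm_of_nonneg (by positivity), div_eq_mul_inv, mul_comm (x ^ m)⁻¹]
  gcongr
  linarith

noncomputable def expStieltjes (k m : ℕ) (x : ℝ) : ℝ :=
  ∫ t in Ioi (0:ℝ), exp (-t) * t ^ k / (t + x) ^ m

lemma expStieltjes_pos (k m : ℕ) {x : ℝ} (hx : 0 < x) : 0 < expStieltjes k m x := by
  have hpos : ∀ t ∈ Ioi (0:ℝ), 0 < exp (-t) * t ^ k / (t + x) ^ m := fun t (ht : 0 < t) => by
    positivity
  rw [expStieltjes, setIntegral_pos_iff_support_of_nonneg_ae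
    ((ae_restrict_iff' measurableSet_Ioi).2 (ae_of_all _ fun t ht => (hpos t ht).le))
    (integrableOn_exp_neg_mul_pow_div_pow k m hx)]
  have hsub : Ioi (0:ℝ) ⊆ Function.support _ ∩ Ioi 0 := fun t ht => ⟨(hpos t ht).ne', ht⟩
  exact (measure_mono hsub).trans_lt' (by simp)

lemma hasDerivAt_expStieltjes (k m : ℕ) {x : ℝ} (hx : 0 < x) :
    HasDerivAt (expStieltjes k m) (-m * expStieltjes k (m + 1) x) x := by
  have h := hasDerivAt_integral_of_dominated_loc_of_deriv_le
    (F := fun y t => exp (-t) * t ^ k / (t + y) ^ m)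
    (F' := fun y t => -(m : ℝ) * (exp (-t) * t ^ k / (t + y) ^ (m + 1)))
    (s := Ioi (x / 2)) (μ := volume.restrict (Ioi 0))
    (bound := fun t => m * (exp (-t) * t ^ k / (x / 2) ^ (m + 1)))
    (Ioi_mem_nhds (half_lt_self hx))
    ?_ (integrableOn_exp_neg_mul_pow_div_pow k m hx)
    ((integrableOn_exp_neg_mul_pow_div_pow k (m + 1) hx).const_mul _).aestronglyMeasurable
    ?_ ?_ ?_
  · rw [integral_const_mul] at h
    exact h.2
  · filter_upwards [eventually_gt_nhds hx] with y hy
    exact (integrableOn_exp_neg_mul_pow_div_pow k m hy).aestronglyMeasurable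
  · filter_upwards [ae_restrict_mem measurableSet_Ioi] with t (ht : 0 < t) y (hy : x / 2 < y)
    have hty : 0 < t + y := by linarith
    rw [norm_mul, norm_neg, Real.norm_natCast, norm_of_nonneg (by positivity)]
    gcongr
    linarith
  · exact ((integrableOn_exp_neg_mul_pow k).const_mul (m / (x / 2) ^ (m + 1))).congr
      (ae_of_all _ fun t => by ring)
  · filter_upwards [ae_restrict_mem measurableSet_Ioi] with t (ht : 0 < t) y (hy : x / 2 < y)
    have hty : t + y ≠ 0 := by linarith
    simp only [div_eq_mul_inv]
    refine (((((hasDerivAt_id' y).const_add t).fun_pow m).fun_inv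
      (pow_ne_zero m hty)).const_mul (exp (-t) * t ^ k)).congr_deriv ?_
    rcases m with _ | m
    · simp
    · rw [Nat.add_sub_cancel]
      field_simp
      ring

theorem iteratedDeriv_eq_of_hasDerivAt {𝕜 E : Type*} [NontriviallyNormedField 𝕜]
    [NormedAddCommGroup E] [NormedSpace 𝕜 E] {U : Set 𝕜} (hU : IsOpen U) {g : ℕ → 𝕜 → E}
    (hg : ∀ n, ∀ y ∈ U, HasDerivAt (g n) (g (n + 1) y) y) (n : ℕ) {x : 𝕜} (hx : x ∈ U) :
    iteratedDeriv n (g 0) x = g n x := by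
  induction n generalizing x with
  | zero => rfl
  | succ n ih =>
    rw [iteratedDeriv_succ, (eventuallyEq_of_mem (hU.mem_nhds hx) fun y hy => ih hy).deriv_eq]
    exact (hg n x hx).deriv

lemma pow_div_add_eq_sum_add {K : Type*} [Field K] (k : ℕ) {t y : K} (h : t + y ≠ 0) :
    y ^ k / (t + y) = ∑ i ∈ Finset.range k, y ^ i * (-t) ^ (k - 1 - i) + (-t) ^ k / (t + y) := by
  rw [← sub_eq_iff_eq_add, ← sub_div, ← geom_sum₂_mul, sub_neg_eq_add, add_comm y,
    mul_div_cancel_right₀ _ h]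

noncomputable def powMulFPoly (k : ℕ) : ℝ[X] :=
  ∑ i : Fin k, C (∫ t in Ioi (0:ℝ), exp (-t) * (-t) ^ (k - 1 - i)) * X ^ (i : ℕ)

lemma degree_powMulFPoly_lt (k : ℕ) : (powMulFPoly k).degree < k :=
  degree_sum_fin_lt _

lemma pow_mul_F_eq (k : ℕ) {y : ℝ} (hy : 0 < y) :
    y ^ k * F y = (powMulFPoly k).eval y + (-1) ^ k * expStieltjes k 1 y := by
  have hint : ∀ j, IntegrableOn (fun t : ℝ => exp (-t) * (-t) ^ j) (Ioi 0) := fun j =>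
    IntegrableOn.congr_fun ((integrableOn_exp_neg_mul_pow j).const_mul ((-1) ^ j))
      (fun t _ => by rw [neg_pow]; ring) measurableSet_Ioi
  calc y ^ k * F y
      = ∫ t in Ioi 0, ∑ i ∈ Finset.range k, y ^ i * (exp (-t) * (-t) ^ (k - 1 - i))
          + (-1) ^ k * (exp (-t) * t ^ k / (t + y) ^ 1) := by
        rw [F, ← integral_const_mul]
        refine setIntegral_congr_fun measurableSet_Ioi fun t (ht : 0 < t) => ?_
        rw [mul_div_left_comm, pow_div_add_eq_sum_add k (by positivity), mul_add,
          Finset.mul_sum, neg_pow t k]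
        congr 1
        · exact Finset.sum_congr rfl fun i _ => by ring
        · ring
    _ = ∑ i ∈ Finset.range k, y ^ i * (∫ t in Ioi 0, exp (-t) * (-t) ^ (k - 1 - i))
          + (-1) ^ k * expStieltjes k 1 y := by
        rw [integral_add (integrable_finsetSum _ fun i _ => (hint _).const_mul _)
          ((integrableOn_exp_neg_mul_pow_div_pow k 1 hy).const_mul _),
          integral_finsetSum _ fun i _ => (hint _).const_mul _, integral_const_mul]
        simp only [integral_const_mul, expStieltjes]
    _ = (powMulFPoly k).eval y + (-1) ^ k * expStieltjes k 1 y := by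
        rw [powMulFPoly, eval_finsetSum, Fin.sum_univ_eq_sum_range (fun i =>
          eval y (C (∫ t in Ioi (0:ℝ), exp (-t) * (-t) ^ (k - 1 - i)) * X ^ i))]
        simp only [eval_mul, eval_C, eval_pow, eval_X, mul_comm]

lemma iteratedDeriv_pow_mul_F (k : ℕ) {x : ℝ} (hx : 0 < x) :
    iteratedDeriv k (fun y => y ^ k * F y) x = k ! * expStieltjes k (k + 1) x := by
  -- `g n` is the `n`-th derivative of `y ^ k * F y` on `y > 0`
  set g : ℕ → ℝ → ℝ := fun n y => (derivative^[n] (powMulFPoly k)).eval y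
    + (-1) ^ k * ((-1) ^ n * n ! * expStieltjes k (n + 1) y) with hg
  have hderiv : ∀ n, ∀ y ∈ Ioi 0, HasDerivAt (g n) (g (n + 1) y) y := fun n y (hy : 0 < y) => by
    refine ((Polynomial.hasDerivAt _ y).add
      (((hasDerivAt_expStieltjes k (n + 1) hy).const_mul _).const_mul _)).congr_deriv ?_
    simp only [hg, Function.iterate_succ_apply']
    push_cast [Nat.factorial_succ]
    ring
  have hg0 : (fun y => y ^ k * F y) =ᶠ[𝓝 x] g 0 :=
    eventuallyEq_of_mem (Ioi_mem_nhds hx) fun y hy => by simpa [hg] using pow_mul_F_eq k hy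
  rw [hg0.iteratedDeriv_eq, iteratedDeriv_eq_of_hasDerivAt isOpen_Ioi hderiv k hx]
  simp only [hg, iterate_derivative_eq_zero_of_degree_lt (degree_powMulFPoly_lt k), eval_zero,
    zero_add]
  rw [← mul_assoc, ← mul_assoc, ← pow_add, Even.neg_one_pow ⟨k, rfl⟩, one_mul]

theorem stmt_4_general (k : ℕ) (x : ℝ) (hx : 0 < x) :
    iteratedDeriv k (fun y => y ^ k * F y) x =
      (Nat.factorial k) * ∫ t in Set.Ioi (0:ℝ), Real.exp (-t) * t ^ k / (t + x) ^ (k + 1) ∧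
    0 < iteratedDeriv k (fun y => y ^ k * F y) x := by
  have h := iteratedDeriv_pow_mul_F k hx
  exact ⟨h, h ▸ mul_pos (by positivity) (expStieltjes_pos k (k + 1) hx)⟩

theorem stmt_4 (k : ℕ) (hk : 1 ≤ k) (x : ℝ) (hx : 0 < x) :
    iteratedDeriv k (fun y => y ^ k * F y) x =
      (Nat.factorial k) * ∫ t in Set.Ioi (0:ℝ), Real.exp (-t) * t ^ k / (t + x) ^ (k + 1) ∧
    0 < iteratedDeriv k (fun y => y ^ k * F y) x :=
  stmt_4_general k x hx
end

section
/- For every positive integer k and every real x > 0, P_{2k}(x)/Q_{2k}(x) < F(x) < P_{2k-1}(x)/Q_{2k-1}(x). -/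
noncomputable def c (n : ℕ) (x : ℝ) : ℝ := if n % 2 = 1 then x else 2 / n

/-- `P n` is the paper's `P_{n-1}` (so `P 0 = P_{-1} = 1`, `P 1 = P_0 = 0`). -/
noncomputable def P : ℕ → ℝ → ℝ
  | 0 => fun _ => 1
  | 1 => fun _ => 0
  | (n + 2) => fun x => c (n + 1) x * P (n + 1) x + P n x

/-- `Q n` is the paper's `Q_{n-1}` (so `Q 0 = Q_{-1} = 0`, `Q 1 = Q_0 = 1`). -/
noncomputable def Q : ℕ → ℝ → ℝ
  | 0 => fun _ => 0
  | 1 => fun _ => 1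
  | (n + 2) => fun x => c (n + 1) x * Q (n + 1) x + Q n x

/-! The remainders `r_n = Q_n F - P_n` obey the same three-term recurrence as `P_n` and `Q_n`.
With `J(a, b) = ∫₀^∞ tᵃ e⁻ᵗ (t + x)⁻ᵇ dt`, the algebraic identity
`J(a+1, b+1) + x J(a, b+1) = J(a, b)` and the integration by parts
`(a+1) J(a, b) = J(a+1, b) + b J(a+1, b+1)` drive an induction giving `r = -J(k, k) < 0` at the
even convergents and `r = J(k, k+1) > 0` at the odd ones; dividing by `Q_n > 0` gives both bounds. -/

open MeasureTheory Set Real Filter Topology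

noncomputable def powExpIntegral (a b : ℕ) (x : ℝ) : ℝ :=
  ∫ t in Ioi (0 : ℝ), t ^ a * exp (-t) / (t + x) ^ b

lemma integrableOn_pow_mul_exp_neg_Ioi (a : ℕ) :
    IntegrableOn (fun t : ℝ => t ^ a * exp (-t)) (Ioi 0) := by
  refine (GammaIntegral_convergent (s := a + 1) (by positivity)).congr_fun
    (fun t _ => ?_) measurableSet_Ioi
  simp only [add_sub_cancel_right, rpow_natCast, mul_comm]

lemma hasDerivAt_pow_succ_mul_exp_neg_div_pow (a b : ℕ) {x t : ℝ} (ht : 0 < t + x) :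
    HasDerivAt (fun t : ℝ => t ^ (a + 1) * exp (-t) / (t + x) ^ b)
      ((a + 1) * (t ^ a * exp (-t) / (t + x) ^ b) - t ^ (a + 1) * exp (-t) / (t + x) ^ b
        - b * (t ^ (a + 1) * exp (-t) / (t + x) ^ (b + 1))) t := by
  have hnum := (hasDerivAt_pow (a + 1) t).fun_mul (hasDerivAt_neg t).exp
  have hden := ((hasDerivAt_id' t).add_const x).fun_pow b
  refine (hnum.fun_div hden (by positivity)).congr_deriv ?_
  rcases b with _ | b
  · simp
    ring
  · field_simp
    push_cast
    ring

lemma tendsto_pow_succ_mul_exp_neg_div_pow_atTop (a b : ℕ) (x : ℝ) :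
    Tendsto (fun t : ℝ => t ^ (a + 1) * exp (-t) / (t + x) ^ b) atTop (𝓝 0) := by
  have hinv : Tendsto (fun t : ℝ => ((t + x) ^ b)⁻¹) atTop (𝓝 (0 ^ b)) := by
    simpa [inv_pow] using
      (tendsto_inv_atTop_zero.comp (tendsto_atTop_add_const_right _ x tendsto_id)).pow b
  simpa [div_eq_mul_inv] using
    (tendsto_pow_mul_exp_neg_atTop_nhds_zero (a + 1)).mul hinv

section

variable {x : ℝ} (hx : 0 < x)
include hx

lemma integrableOn_powExpIntegral (a b : ℕ) :
    IntegrableOn (fun t : ℝ => t ^ a * exp (-t) / (t + x) ^ b) (Ioi 0) := by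
  have hmeas : AEStronglyMeasurable (fun t : ℝ => t ^ a * exp (-t) / (t + x) ^ b)
      (volume.restrict (Ioi 0)) :=
    ContinuousOn.aestronglyMeasurable (ContinuousOn.div (by fun_prop) (by fun_prop)
      fun t (ht : 0 < t) => by positivity) measurableSet_Ioi
  refine ((integrableOn_pow_mul_exp_neg_Ioi a).const_mul (x ^ b)⁻¹).mono' hmeas ?_
  rw [ae_restrict_iff' measurableSet_Ioi]
  filter_upwards with t (ht : 0 < t)
  rw [norm_of_nonneg (by positivity), ← div_eq_inv_mul]
  gcongr
  linarith

lemma powExpIntegral_pos (a b : ℕ) : 0 < powExpIntegral a b x := by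
  have hpos : ∀ t ∈ Ioi (0 : ℝ), 0 < t ^ a * exp (-t) / (t + x) ^ b :=
    fun t (ht : 0 < t) => by positivity
  rw [powExpIntegral, setIntegral_pos_iff_support_of_nonneg_ae
    ((ae_restrict_iff' measurableSet_Ioi).2 (.of_forall fun t ht => (hpos t ht).le))
    (integrableOn_powExpIntegral hx a b)]
  calc (0 : ENNReal) < volume (Ioi (0 : ℝ)) := by simp
    _ ≤ _ := measure_mono fun t ht => show t ∈ _ ∩ _ from ⟨(hpos t ht).ne', ht⟩

lemma powExpIntegral_succ_succ_add_mul (a b : ℕ) :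
    powExpIntegral (a + 1) (b + 1) x + x * powExpIntegral a (b + 1) x = powExpIntegral a b x := by
  rw [powExpIntegral, powExpIntegral, powExpIntegral, ← integral_const_mul,
    ← integral_add (integrableOn_powExpIntegral hx _ _)
      ((integrableOn_powExpIntegral hx _ _).const_mul x)]
  refine setIntegral_congr_fun measurableSet_Ioi fun t (ht : 0 < t) => ?_
  have : t + x ≠ 0 := by positivity
  field_simp
  ring

lemma succ_mul_powExpIntegral (a b : ℕ) :
    (a + 1) * powExpIntegral a b x
      = powExpIntegral (a + 1) b x + b * powExpIntegral (a + 1) (b + 1) x := by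
  have hJ := integrableOn_powExpIntegral hx
  have key := integral_Ioi_of_hasDerivAt_of_tendsto'
    (fun t (ht : 0 ≤ t) => hasDerivAt_pow_succ_mul_exp_neg_div_pow a b (by positivity))
    ((((hJ a b).const_mul (a + 1)).sub (hJ (a + 1) b)).sub
      ((hJ (a + 1) (b + 1)).const_mul b))
    (tendsto_pow_succ_mul_exp_neg_div_pow_atTop a b x)
  have hzero : (0 : ℝ) ^ (a + 1) * exp (-0) / (0 + x) ^ b = 0 := by simp
  rw [integral_sub (((hJ a b).const_mul _).sub' (hJ (a + 1) b)) ((hJ _ _).const_mul _),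
    integral_sub ((hJ a b).const_mul _) (hJ (a + 1) b), integral_const_mul,
    integral_const_mul, hzero] at key
  rw [powExpIntegral, powExpIntegral, powExpIntegral]
  linarith

end

lemma powExpIntegral_zero_zero (x : ℝ) : powExpIntegral 0 0 x = 1 := by
  simpa [powExpIntegral] using integral_exp_neg_Ioi_zero

lemma F_eq_powExpIntegral (x : ℝ) : F x = powExpIntegral 0 1 x := by
  simp [F, powExpIntegral]

lemma c_odd (k : ℕ) (x : ℝ) : c (2 * k + 1) x = x := by
  simp [c]

lemma c_even (k : ℕ) (x : ℝ) : c (2 * k + 2) x = ((k : ℝ) + 1)⁻¹ := by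
  rw [c, if_neg (by omega)]
  push_cast
  field_simp

lemma c_succ_pos (n : ℕ) {x : ℝ} (hx : 0 < x) : 0 < c (n + 1) x := by
  unfold c
  split_ifs
  · exact hx
  · positivity

lemma Q_succ_pos {x : ℝ} (hx : 0 < x) (n : ℕ) : 0 < Q (n + 1) x := by
  suffices h : 0 ≤ Q n x ∧ 0 < Q (n + 1) x from h.2
  induction n with
  | zero => simp [Q]
  | succ n ih =>
    refine ⟨ih.2.le, ?_⟩
    show 0 < c (n + 1) x * Q (n + 1) x + Q n x
    nlinarith [c_succ_pos n hx]

noncomputable def remainder (n : ℕ) (x : ℝ) : ℝ := Q n x * F x - P n x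

lemma remainder_add_two (n : ℕ) (x : ℝ) :
    remainder (n + 2) x = c (n + 1) x * remainder (n + 1) x + remainder n x := by
  simp only [remainder, P, Q]
  ring

lemma remainder_even_odd {x : ℝ} (hx : 0 < x) (k : ℕ) :
    remainder (2 * k) x = -powExpIntegral k k x
      ∧ remainder (2 * k + 1) x = powExpIntegral k (k + 1) x := by
  induction k with
  | zero => simp [remainder, P, Q, powExpIntegral_zero_zero, F_eq_powExpIntegral]
  | succ k ih =>
    have heven : remainder (2 * k + 2) x = -powExpIntegral (k + 1) (k + 1) x := by
      rw [remainder_add_two, c_odd, ih.1, ih.2]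
      linarith [powExpIntegral_succ_succ_add_mul hx k k]
    refine ⟨heven, ?_⟩
    rw [show 2 * (k + 1) + 1 = 2 * k + 1 + 2 by ring, remainder_add_two, c_even, heven, ih.2]
    have hparts := succ_mul_powExpIntegral hx k (k + 1)
    push_cast at hparts
    field_simp
    linarith

/-- `P (n+1)`, `Q (n+1)` are the paper's `P_n`, `Q_n`. -/
theorem stmt_10 (k : ℕ) (hk : 1 ≤ k) (x : ℝ) (hx : 0 < x) :
    P (2 * k + 1) x / Q (2 * k + 1) x < F x ∧ F x < P (2 * k) x / Q (2 * k) x := by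
  obtain ⟨heven_eq, hodd_eq⟩ := remainder_even_odd hx k
  have hodd : 0 < remainder (2 * k + 1) x := hodd_eq ▸ powExpIntegral_pos hx k (k + 1)
  have heven : remainder (2 * k) x < 0 := heven_eq ▸ neg_neg_of_pos (powExpIntegral_pos hx k k)
  have hQodd : 0 < Q (2 * k + 1) x := Q_succ_pos hx (2 * k)
  have hQeven : 0 < Q (2 * k) x := by
    simpa [show 2 * k - 1 + 1 = 2 * k by omega] using Q_succ_pos hx (2 * k - 1)
  unfold remainder at hodd heven
  constructor
  · rw [div_lt_iff₀ hQodd]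
    linarith
  · rw [lt_div_iff₀ hQeven]
    linarith
end
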